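/- The sequence β_3(T^(2)[n])/n² converges to 1/2 as n → ∞; that is, the 3-dependent limiting density τ_3^(2) for two-dimensional toroidal kings graphs equals 1/2. -/

import Mathlib

/-!
Lower bound: the rows `0, 2, …, 2 (⌊n/2⌋ - 1)` form a 3-dependent set (each of its vertices
sees only its two horizontal neighbours), of size `⌊n/2⌋ n`.

Upper bound, by discharging: there is a function `Φ` of `3 × 2` blocks of `S` such that at every
vertex `t` whose `3 × 3` window satisfies the 3-dependence condition at its centre,
`8 [centre ∈ S] ≤ 4 + (Φ(left columns) - Φ(right columns)) + (Φ(top rows)ᵀ - Φ(bottom rows)ᵀ)`.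
Since the right columns of the window at `t` are the left columns of the window at `t + e₂`
(and likewise vertically), the differences telescope when summed over the torus, leaving
`8 |S| ≤ 4 n²`.
-/

open Filter Topology

/-- The `d`-dimensional kings graph on `Fin (n 0) × ⋯ × Fin (n (d-1))`:
distinct vertices are adjacent iff their coordinates differ by at most 1. -/
def kingsGraph (d : ℕ) (n : Fin d → ℕ) :
    SimpleGraph (∀ i : Fin d, Fin (n i)) where
  Adj u v := u ≠ v ∧ ∀ i, |((v i : ℤ)) - (u i : ℤ)| ≤ 1
  symm := by
    constructor
    rintro u v ⟨h1, h2⟩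
    exact ⟨h1.symm, fun i => by rw [abs_sub_comm]; exact h2 i⟩
  loopless := by constructor; intro v h; exact h.1 rfl

/-- The `d`-dimensional toroidal kings graph on `ZMod (n 0) × ⋯ × ZMod (n (d-1))`:
distinct vertices are adjacent iff each coordinate difference is `-1`, `0` or `1`. -/
def torusGraph (d : ℕ) (n : Fin d → ℕ) :
    SimpleGraph (∀ i : Fin d, ZMod (n i)) where
  Adj u v := u ≠ v ∧ ∀ i, v i - u i = -1 ∨ v i - u i = 0 ∨ v i - u i = 1
  symm := by
    constructor
    rintro u v ⟨h1, h2⟩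
    refine ⟨h1.symm, fun i => ?_⟩
    rcases h2 i with h | h | h
    · right; right; rw [show u i - v i = -(v i - u i) by ring, h]; norm_num
    · right; left; rw [show u i - v i = -(v i - u i) by ring, h]; norm_num
    · left; rw [show u i - v i = -(v i - u i) by ring, h]
  loopless := by constructor; intro v h; exact h.1 rfl

/-- A set `S` of vertices is `k`-dependent if every vertex of `S`
has at most `k` neighbors in `S`. -/
def IsKDependent {V : Type*} (G : SimpleGraph V) (k : ℕ) (S : Set V) : Prop :=
  ∀ v ∈ S, (S ∩ G.neighborSet v).ncard ≤ k

/-- `betaK G k` is the maximum cardinality of a `k`-dependent set in `G`. -/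
noncomputable def betaK {V : Type*} (G : SimpleGraph V) (k : ℕ) : ℕ :=
  sSup {m | ∃ S : Set V, IsKDependent G k S ∧ S.ncard = m}

/-- A set `S` of vertices is half-dependent if every vertex `v ∈ S`
has at most `|N(v)|/2` neighbors in `S`. -/
def IsHalfDependent {V : Type*} (G : SimpleGraph V) (S : Set V) : Prop :=
  ∀ v ∈ S, 2 * (S ∩ G.neighborSet v).ncard ≤ (G.neighborSet v).ncard

/-- `halfNum G` is the maximum cardinality of a half-dependent set in `G`. -/
noncomputable def halfNum {V : Type*} (G : SimpleGraph V) : ℕ :=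
  sSup {m | ∃ S : Set V, IsHalfDependent G S ∧ S.ncard = m}

/-- A graph is vertex-transitive if any vertex can be mapped to any other
by a graph automorphism. -/
def IsVertexTransitive {V : Type*} (G : SimpleGraph V) : Prop :=
  ∀ u v : V, ∃ f : G ≃g G, f u = v

open Finset

section Discharging

variable {G : Type*} [AddCommGroup G] [Fintype G]

theorem sum_sub_comp_add_right (f : G → ℤ) (a : G) : ∑ t, (f t - f (t + a)) = 0 := by
  rw [sum_sub_distrib, sub_eq_zero]
  exact (Equiv.sum_comp (Equiv.addRight a) f).symm

theorem sum_le_card_mul_of_le_add_potential {w F H : G → ℤ} {c : ℤ} {a b : G}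
    (h : ∀ t, w t ≤ c + (F t - F (t + a)) + (H t - H (t + b))) :
    ∑ t, w t ≤ Fintype.card G * c := by
  calc ∑ t, w t ≤ ∑ t, (c + (F t - F (t + a)) + (H t - H (t + b))) :=
        sum_le_sum fun t _ => h t
    _ = Fintype.card G * c := by
      rw [sum_add_distrib, sum_add_distrib, sum_sub_comp_add_right, sum_sub_comp_add_right]
      simp

end Discharging

section Beta

variable {V : Type*} {G : SimpleGraph V} {k : ℕ}

theorem betaK_le_of_forall {m : ℕ} (h : ∀ S, IsKDependent G k S → S.ncard ≤ m) :
    betaK G k ≤ m :=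
  csSup_le ⟨0, ∅, fun _ hv => hv.elim, Set.ncard_empty _⟩ (by rintro _ ⟨S, hS, rfl⟩; exact h S hS)

theorem IsKDependent.ncard_le_betaK [Finite V] {S : Set V} (hS : IsKDependent G k S) :
    S.ncard ≤ betaK G k :=
  le_csSup ⟨Nat.card V, by rintro _ ⟨T, -, rfl⟩; exact Set.ncard_le_card T⟩ ⟨S, hS, rfl⟩

end Beta

theorem ZMod.natCast_inj_of_lt {n a b : ℕ} (ha : a < n) (hb : b < n)
    (h : (a : ZMod n) = b) : a = b := by
  rw [← ZMod.val_natCast_of_lt ha, ← ZMod.val_natCast_of_lt hb, h]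

def leftCols (p : Fin 3 → Fin 3 → Bool) : Fin 3 → Fin 2 → Bool := fun i j => p i j.castSucc

def rightCols (p : Fin 3 → Fin 3 → Bool) : Fin 3 → Fin 2 → Bool := fun i j => p i j.succ

def centerDegree (p : Fin 3 → Fin 3 → Bool) : ℕ :=
  #({q | q ≠ (1, 1) ∧ p q.1 q.2 = true} : Finset (Fin 3 × Fin 3))

/- Found by solving the linear program whose variables are the 64 values of `potential` and
whose constraints are the instances of `le_potential_of_centerDegree_le` below. -/
def potentialTable : List ℤ :=
  [7, 7, 11, 6, 2, 6, 5, 5, 6, 6, 11, 5, 3, 9, 8, 8, 10, 9, 13, 9, 1, 5, 4, 4, 9, 7, 14, 6, 2, 6,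
   7, 0, 9, 7, 10, 6, 2, 6, 7, 7, 4, 4, 9, 3, 3, 9, 10, 0, 12, 12, 15, 11, 1, 5, 6, 6, 9, 7, 14, 0,
   2, 0, 0, 0]

def potential (q : Fin 3 → Fin 2 → Bool) : ℤ :=
  potentialTable.getD ((q 0 0).toNat + 2 * (q 0 1).toNat + 4 * (q 1 0).toNat
    + 8 * (q 1 1).toNat + 16 * (q 2 0).toNat + 32 * (q 2 1).toNat) 0

set_option maxRecDepth 5000 in
theorem le_potential_of_centerDegree_le : ∀ p : Fin 3 → Fin 3 → Bool,
    (p 1 1 = true → centerDegree p ≤ 3) →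
    (if p 1 1 then 8 else 0 : ℤ) ≤ 4 + (potential (leftCols p) - potential (rightCols p))
      + (potential (leftCols (Function.swap p)) - potential (rightCols (Function.swap p))) := by
  decide

section UpperBound

variable {n : ℕ}

def cell (n : ℕ) (i j : Fin 3) : Fin 2 → ZMod n := ![((i : ℕ) : ZMod n), ((j : ℕ) : ZMod n)]

theorem cell_injective (hn : 3 ≤ n) :
    Function.Injective fun q : Fin 3 × Fin 3 => cell n q.1 q.2 := by
  rintro ⟨i, j⟩ ⟨i', j'⟩ h
  have h0 := congrFun h 0
  have h1 := congrFun h 1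
  simp only [cell, Matrix.cons_val_zero, Matrix.cons_val_one] at h0 h1
  ext
  · exact ZMod.natCast_inj_of_lt (by omega) (by omega) h0
  · exact ZMod.natCast_inj_of_lt (by omega) (by omega) h1

theorem natCast_fin_three_sub_one (a : Fin 3) :
    ((a : ℕ) : ZMod n) - 1 = -1 ∨ ((a : ℕ) : ZMod n) - 1 = 0 ∨ ((a : ℕ) : ZMod n) - 1 = 1 := by
  fin_cases a
  · left; simp
  · right; left; simp
  · right; right; push_cast; ring

theorem torusGraph_adj_add_cell (hn : 3 ≤ n) (t : Fin 2 → ZMod n) {q : Fin 3 × Fin 3}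
    (hq : q ≠ (1, 1)) : (torusGraph 2 fun _ => n).Adj (t + cell n 1 1) (t + cell n q.1 q.2) := by
  refine ⟨fun h => hq (cell_injective hn (add_left_cancel h)).symm, fun k => ?_⟩
  rw [Pi.add_apply, Pi.add_apply, add_sub_add_left_eq_sub]
  fin_cases k
  · simpa [cell] using natCast_fin_three_sub_one q.1
  · simpa [cell] using natCast_fin_three_sub_one q.2

theorem cell_succ_right (i : Fin 3) (j : Fin 2) :
    cell n i j.succ = cell n 0 1 + cell n i j.castSucc := by
  funext k
  fin_cases k <;> simp [cell, add_comm]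

theorem cell_succ_left (i : Fin 2) (j : Fin 3) :
    cell n i.succ j = cell n 1 0 + cell n i.castSucc j := by
  funext k
  fin_cases k <;> simp [cell, add_comm]

open Classical in
noncomputable def window (S : Set (Fin 2 → ZMod n)) (t : Fin 2 → ZMod n) :
    Fin 3 → Fin 3 → Bool :=
  fun i j => decide (t + cell n i j ∈ S)

theorem rightCols_window (S : Set (Fin 2 → ZMod n)) (t : Fin 2 → ZMod n) :
    rightCols (window S t) = leftCols (window S (t + cell n 0 1)) := by
  funext i j
  simp [rightCols, leftCols, window, cell_succ_right, add_assoc]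

theorem rightCols_swap_window (S : Set (Fin 2 → ZMod n)) (t : Fin 2 → ZMod n) :
    rightCols (Function.swap (window S t)) =
      leftCols (Function.swap (window S (t + cell n 1 0))) := by
  funext i j
  simp [rightCols, leftCols, window, cell_succ_left, add_assoc]

theorem centerDegree_window_le (hn : 3 ≤ n) {S : Set (Fin 2 → ZMod n)}
    (hS : IsKDependent (torusGraph 2 fun _ => n) 3 S) (t : Fin 2 → ZMod n)
    (ht : window S t 1 1 = true) : centerDegree (window S t) ≤ 3 := by
  have : NeZero n := ⟨by omega⟩
  set marked : Finset (Fin 3 × Fin 3) := {q | q ≠ (1, 1) ∧ window S t q.1 q.2 = true}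
  have hsub : (marked.image fun q => t + cell n q.1 q.2 : Set (Fin 2 → ZMod n)) ⊆
      S ∩ (torusGraph 2 fun _ => n).neighborSet (t + cell n 1 1) := by
    intro v hv
    simp only [coe_image, Set.mem_image, mem_coe, marked, mem_filter, mem_univ, true_and] at hv
    obtain ⟨q, ⟨hq, hqS⟩, rfl⟩ := hv
    exact ⟨by simpa [window] using hqS, torusGraph_adj_add_cell hn t hq⟩
  calc #marked = #(marked.image fun q => t + cell n q.1 q.2) :=
        (card_image_of_injective _ ((add_right_injective t).comp (cell_injective hn))).symm
    _ ≤ (S ∩ (torusGraph 2 fun _ => n).neighborSet (t + cell n 1 1)).ncard := by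
        rw [← Set.ncard_coe_finset]
        exact Set.ncard_le_ncard hsub (Set.toFinite _)
    _ ≤ 3 := hS _ (by simpa [window] using ht)

theorem sum_window_center_eq_ncard [NeZero n] (S : Set (Fin 2 → ZMod n)) :
    ∑ t, (if window S t 1 1 then 1 else 0) = S.ncard := by
  classical
  calc ∑ t, (if window S t 1 1 then 1 else 0) = ∑ t, if t ∈ S then 1 else 0 := by
        simp only [window, decide_eq_true_eq]
        exact Equiv.sum_comp (Equiv.addRight (cell n 1 1)) fun v => if v ∈ S then 1 else 0
    _ = S.ncard := by simp [Set.ncard_eq_toFinset_card']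

theorem two_mul_ncard_le_sq_of_isKDependent (hn : 3 ≤ n) {S : Set (Fin 2 → ZMod n)}
    (hS : IsKDependent (torusGraph 2 fun _ => n) 3 S) : 2 * S.ncard ≤ n ^ 2 := by
  have : NeZero n := ⟨by omega⟩
  have hlocal (t : Fin 2 → ZMod n) :
      (if window S t 1 1 then 8 else 0 : ℤ) ≤
        4 + (potential (leftCols (window S t)) - potential (leftCols (window S (t + cell n 0 1))))
          + (potential (leftCols (Function.swap (window S t)))
            - potential (leftCols (Function.swap (window S (t + cell n 1 0))))) := by
    rw [← rightCols_window, ← rightCols_swap_window]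
    exact le_potential_of_centerDegree_le _ (centerDegree_window_le hn hS t)
  have hsum := sum_le_card_mul_of_le_add_potential hlocal
  have hcount : ∑ t, (if window S t 1 1 then 8 else 0 : ℤ) = 8 * S.ncard := by
    rw [← sum_window_center_eq_ncard S]
    push_cast
    simp only [mul_sum, mul_ite, mul_one, mul_zero]
  have hcard : Fintype.card (Fin 2 → ZMod n) = n ^ 2 := by simp
  rw [hcount, hcard] at hsum
  omega

theorem two_mul_betaK_torusGraph_le (hn : 3 ≤ n) :
    2 * betaK (torusGraph 2 fun _ => n) 3 ≤ n ^ 2 := by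
  have : betaK (torusGraph 2 fun _ => n) 3 ≤ n ^ 2 / 2 :=
    betaK_le_of_forall fun S hS => by
      have := two_mul_ncard_le_sq_of_isKDependent hn hS
      omega
  omega

end UpperBound

section LowerBound

variable {n : ℕ}

def evenRows (n : ℕ) : Set (Fin 2 → ZMod n) :=
  Set.range fun p : Fin (n / 2) × ZMod n => ![((2 * p.1 : ℕ) : ZMod n), p.2]

theorem eq_of_natCast_two_mul_sub_mem {a b : ℕ} (ha : a < n / 2) (hb : b < n / 2)
    (h : ((2 * b : ℕ) : ZMod n) - ((2 * a : ℕ) : ZMod n) = -1 ∨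
      ((2 * b : ℕ) : ZMod n) - ((2 * a : ℕ) : ZMod n) = 0 ∨
      ((2 * b : ℕ) : ZMod n) - ((2 * a : ℕ) : ZMod n) = 1) : a = b := by
  rcases h with h | h | h
  · have : ((2 * b + 1 : ℕ) : ZMod n) = ((2 * a : ℕ) : ZMod n) := by
      push_cast at h ⊢
      linear_combination h
    have := ZMod.natCast_inj_of_lt (by omega) (by omega) this
    omega
  · have := ZMod.natCast_inj_of_lt (by omega) (by omega) (sub_eq_zero.mp h)
    omega
  · have : ((2 * b : ℕ) : ZMod n) = ((2 * a + 1 : ℕ) : ZMod n) := by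
      push_cast at h ⊢
      linear_combination h
    have := ZMod.natCast_inj_of_lt (by omega) (by omega) this
    omega

theorem isKDependent_evenRows : IsKDependent (torusGraph 2 fun _ => n) 3 (evenRows n) := by
  rintro _ ⟨⟨a, b⟩, rfl⟩
  set r : ZMod n := ((2 * a : ℕ) : ZMod n)
  have hsub : evenRows n ∩ (torusGraph 2 fun _ => n).neighborSet ![r, b] ⊆
      {![r, b - 1], ![r, b + 1]} := by
    rintro _ ⟨⟨⟨a', b'⟩, rfl⟩, hne, hdiff⟩
    obtain rfl : a = a' :=
      Fin.ext <| eq_of_natCast_two_mul_sub_mem a.2 a'.2 (by simpa [r] using hdiff 0)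
    rcases hdiff 1 with h | h | h <;> simp only [Matrix.cons_val_one, Matrix.cons_val_zero] at h
    · obtain rfl : b' = b - 1 := by linear_combination h
      exact Or.inl rfl
    · exact absurd (by simp [r, sub_eq_zero.mp h]) hne
    · obtain rfl : b' = b + 1 := by linear_combination h
      exact Or.inr rfl
  calc _ ≤ ({![r, b - 1], ![r, b + 1]} : Set (Fin 2 → ZMod n)).ncard :=
        Set.ncard_le_ncard hsub (Set.toFinite _)
    _ ≤ 3 := (Set.ncard_insert_le _ _).trans (by simp)

theorem ncard_evenRows : (evenRows n).ncard = n / 2 * n := by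
  rw [evenRows, Set.ncard_range_of_injective, Nat.card_prod, Nat.card_zmod,
    Nat.card_eq_fintype_card, Fintype.card_fin]
  rintro ⟨⟨a, ha⟩, b⟩ ⟨⟨a', ha'⟩, b'⟩ h
  have h0 := congrFun h 0
  have h1 := congrFun h 1
  dsimp only at h0 h1
  simp only [Matrix.cons_val_zero, Matrix.cons_val_one] at h0 h1
  have := ZMod.natCast_inj_of_lt (by omega) (by omega) h0
  simp only [Prod.mk.injEq, Fin.mk.injEq]
  exact ⟨by omega, h1⟩

theorem le_betaK_torusGraph [NeZero n] : n / 2 * n ≤ betaK (torusGraph 2 fun _ => n) 3 :=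
  ncard_evenRows (n := n) ▸ isKDependent_evenRows.ncard_le_betaK

end LowerBound

/-- τ_3^(2) = 1/2. -/
theorem stmt_19 :
    Filter.Tendsto
      (fun n : ℕ => (betaK (torusGraph 2 (fun _ => n)) 3 : ℝ) / (n : ℝ) ^ 2)
      Filter.atTop (nhds (1/2 : ℝ)) := by
  have hlow : Tendsto (fun n : ℕ => (1 / 2 : ℝ) - (1 / 2) / n) atTop (𝓝 (1 / 2)) := by
    simpa using tendsto_const_nhds.sub (tendsto_const_div_atTop_nhds_zero_nat (1 / 2 : ℝ))
  refine tendsto_of_tendsto_of_tendsto_of_le_of_le' hlow tendsto_const_nhds ?_ ?_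
  · filter_upwards [eventually_ge_atTop 1] with n hn
    have : NeZero n := ⟨by omega⟩
    have hβ : ((n / 2 : ℕ) : ℝ) * n ≤ betaK (torusGraph 2 fun _ => n) 3 := by
      exact_mod_cast le_betaK_torusGraph
    have hhalf : (n : ℝ) ≤ 2 * (n / 2 : ℕ) + 1 := by
      exact_mod_cast (by omega : n ≤ 2 * (n / 2) + 1)
    rw [le_div_iff₀ (by positivity)]
    field_simp
    nlinarith
  · filter_upwards [eventually_ge_atTop 3] with n hn
    have hβ : 2 * (betaK (torusGraph 2 fun _ => n) 3 : ℝ) ≤ n ^ 2 := by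
      exact_mod_cast two_mul_betaK_torusGraph_le hn
    rw [div_le_iff₀ (by positivity)]
    linarith
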